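/- arXiv:2501.18471 — 6 statements merged into one kernel-verified Lean document; each statement's English description precedes it below -/
import Mathlib

section
/- For every p₁, p₂ ∈ P such that F(p₁) and F(p₂) are nonempty, and every t ∈ [0,1], the set F(t·p₁ + (1−t)·p₂) is nonempty and, for each index i ∈ {1,…,n_x}, x_i^cv(t·p₁ + (1−t)·p₂) ≤ t·x_i^cv(p₁) + (1−t)·x_i^cv(p₂). In particular, x_i^cv is convex on the set of p ∈ P for which F(p) is nonempty. -/
open Set

/-- convexity of the implicit-function convex relaxations `x_i^cv`
defined as optimal-value functions of the feasible sets `F p`. -/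
theorem implicit_relaxation_cv_convex
    (nx np : ℕ) (hnx : 0 < nx) (hnp : 0 < np)
    (xL xU : Fin nx → ℝ) (hX : xL ≤ xU)
    (P : Set (Fin np → ℝ)) (hP : Convex ℝ P)
    (fcv fcc : (Fin nx → ℝ) → (Fin np → ℝ) → (Fin nx → ℝ))
    (hcv : ∀ i : Fin nx,
      ConvexOn ℝ ((Set.Icc xL xU) ×ˢ P)
        (fun q : (Fin nx → ℝ) × (Fin np → ℝ) => fcv q.1 q.2 i))
    (hcc : ∀ i : Fin nx,
      ConcaveOn ℝ ((Set.Icc xL xU) ×ˢ P)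
        (fun q : (Fin nx → ℝ) × (Fin np → ℝ) => fcc q.1 q.2 i))
    (F : (Fin np → ℝ) → Set (Fin nx → ℝ))
    (hF : ∀ p, F p = {ξ | ξ ∈ Set.Icc xL xU ∧ fcv ξ p ≤ 0 ∧ 0 ≤ fcc ξ p})
    (xcv : Fin nx → (Fin np → ℝ) → ℝ)
    (hxcv : ∀ i p, xcv i p = sInf ((fun ξ => ξ i) '' F p))
    (p₁ p₂ : Fin np → ℝ) (hp₁ : p₁ ∈ P) (hp₂ : p₂ ∈ P)
    (h₁ : (F p₁).Nonempty) (h₂ : (F p₂).Nonempty)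
    (t : ℝ) (ht : t ∈ Set.Icc (0 : ℝ) 1) :
    (F (t • p₁ + (1 - t) • p₂)).Nonempty ∧
      ∀ i : Fin nx,
        xcv i (t • p₁ + (1 - t) • p₂) ≤ t * xcv i p₁ + (1 - t) * xcv i p₂ := by

  obtain ⟨ht0, ht1⟩ := ht
  have ht1' : 0 ≤ 1 - t := by linarith
  have hptP : t • p₁ + (1 - t) • p₂ ∈ P := hP hp₁ hp₂ ht0 ht1' (by ring)
  have key : ∀ ξ₁ ∈ F p₁, ∀ ξ₂ ∈ F p₂,
      t • ξ₁ + (1 - t) • ξ₂ ∈ F (t • p₁ + (1 - t) • p₂) := by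
    intro ξ₁ hξ₁ ξ₂ hξ₂
    rw [hF] at hξ₁ hξ₂ ⊢
    obtain ⟨hI₁, hcv₁, hcc₁⟩ := hξ₁
    obtain ⟨hI₂, hcv₂, hcc₂⟩ := hξ₂
    refine ⟨convex_Icc xL xU hI₁ hI₂ ht0 ht1' (by ring), ?_, ?_⟩
    · intro i
      have h := (hcv i).2 (Set.mk_mem_prod hI₁ hp₁) (Set.mk_mem_prod hI₂ hp₂) ht0 ht1' (by ring)
      simp only [Prod.smul_mk, Prod.mk_add_mk, smul_eq_mul] at h
      have := hcv₁ i
      have := hcv₂ i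
      simp only [Pi.zero_apply] at *
      nlinarith [h]
    · intro i
      have h := (hcc i).2 (Set.mk_mem_prod hI₁ hp₁) (Set.mk_mem_prod hI₂ hp₂) ht0 ht1' (by ring)
      simp only [Prod.smul_mk, Prod.mk_add_mk, smul_eq_mul] at h
      have := hcc₁ i
      have := hcc₂ i
      simp only [Pi.zero_apply] at *
      nlinarith [h]
  obtain ⟨ξa, hξa⟩ := h₁
  obtain ⟨ξb, hξb⟩ := h₂
  refine ⟨⟨_, key _ hξa _ hξb⟩, ?_⟩
  intro i
  have bdd : ∀ p, BddBelow ((fun ξ => ξ i) '' F p) := by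
    intro p
    refine ⟨xL i, ?_⟩
    rintro y ⟨ξ, hξ, rfl⟩
    rw [hF] at hξ
    exact hξ.1.1 i
  have ne₁ : ((fun ξ => ξ i) '' F p₁).Nonempty := ⟨ξa i, ⟨ξa, hξa, rfl⟩⟩
  have ne₂ : ((fun ξ => ξ i) '' F p₂).Nonempty := ⟨ξb i, ⟨ξb, hξb, rfl⟩⟩
  rw [hxcv, hxcv, hxcv]
  apply le_of_forall_pos_le_add
  intro ε hε
  obtain ⟨a, ⟨ξ₁, hξ₁, rfl⟩, ha⟩ :=
    exists_lt_of_csInf_lt ne₁ (lt_add_of_pos_right _ (half_pos hε))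
  obtain ⟨b, ⟨ξ₂, hξ₂, rfl⟩, hb⟩ :=
    exists_lt_of_csInf_lt ne₂ (lt_add_of_pos_right _ (half_pos hε))
  have hmem : (t • ξ₁ + (1 - t) • ξ₂) i ∈
      (fun ξ => ξ i) '' F (t • p₁ + (1 - t) • p₂) :=
    ⟨_, key _ hξ₁ _ hξ₂, rfl⟩
  have hle := csInf_le (bdd _) hmem
  have hval : (t • ξ₁ + (1 - t) • ξ₂) i = t * ξ₁ i + (1 - t) * ξ₂ i := by
    simp [smul_eq_mul]
  rw [hval] at hle
  nlinarith [mul_le_mul_of_nonneg_left ha.le ht0,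
    mul_le_mul_of_nonneg_left hb.le ht1']
end

section
/- For every p₁, p₂ ∈ P such that F(p₁) and F(p₂) are nonempty, and every t ∈ [0,1], the set F(t·p₁ + (1−t)·p₂) is nonempty and, for each index i ∈ {1,…,n_x}, x_i^cc(t·p₁ + (1−t)·p₂) ≥ t·x_i^cc(p₁) + (1−t)·x_i^cc(p₂). In particular, x_i^cc is concave on the set of p ∈ P for which F(p) is nonempty. -/
open Set

private lemma sup_helper (A B C : Set ℝ) (hA : A.Nonempty) (hB : B.Nonempty)
    (hA' : BddAbove A) (hB' : BddAbove B) (hC : BddAbove C)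
    (t : ℝ) (ht0 : 0 ≤ t) (ht1 : t ≤ 1)
    (h : ∀ a ∈ A, ∀ b ∈ B, t * a + (1 - t) * b ∈ C) :
    t * sSup A + (1 - t) * sSup B ≤ sSup C := by
  rcases eq_or_lt_of_le ht0 with h0 | h0
  · have ht' : t = 0 := h0.symm
    subst ht'
    have : sSup B ≤ sSup C := by
      apply csSup_le hB
      intro b hb
      obtain ⟨a, ha⟩ := hA
      have := le_csSup hC (h a ha b hb)
      linarith
    linarith
  rcases eq_or_lt_of_le ht1 with h1 | h1
  · subst h1
    have : sSup A ≤ sSup C := by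
      apply csSup_le hA
      intro a ha
      obtain ⟨b, hb⟩ := hB
      have := le_csSup hC (h a ha b hb)
      linarith
    linarith
  have h1t : 0 < 1 - t := by linarith
  have key : ∀ b ∈ B, t * sSup A + (1 - t) * b ≤ sSup C := by
    intro b hb
    have hdiv : sSup A ≤ (sSup C - (1 - t) * b) / t := by
      apply csSup_le hA
      intro a ha
      have := le_csSup hC (h a ha b hb)
      rw [le_div_iff₀ h0]; linarith
    have := (le_div_iff₀ h0).mp hdiv
    linarith
  have hdiv2 : sSup B ≤ (sSup C - t * sSup A) / (1 - t) := by
    apply csSup_le hB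
    intro b hb
    rw [le_div_iff₀ h1t]
    have := key b hb
    linarith
  have := (le_div_iff₀ h1t).mp hdiv2
  linarith

/-- concavity of the implicit-function concave relaxations `x_i^cc`
defined as optimal-value functions of the feasible sets `F p`. -/
theorem implicit_relaxation_cc_concave
    (nx np : ℕ) (hnx : 0 < nx) (hnp : 0 < np)
    (xL xU : Fin nx → ℝ) (hX : xL ≤ xU)
    (P : Set (Fin np → ℝ)) (hP : Convex ℝ P)
    (fcv fcc : (Fin nx → ℝ) → (Fin np → ℝ) → (Fin nx → ℝ))
    (hcv : ∀ i : Fin nx,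
      ConvexOn ℝ ((Set.Icc xL xU) ×ˢ P)
        (fun q : (Fin nx → ℝ) × (Fin np → ℝ) => fcv q.1 q.2 i))
    (hcc : ∀ i : Fin nx,
      ConcaveOn ℝ ((Set.Icc xL xU) ×ˢ P)
        (fun q : (Fin nx → ℝ) × (Fin np → ℝ) => fcc q.1 q.2 i))
    (F : (Fin np → ℝ) → Set (Fin nx → ℝ))
    (hF : ∀ p, F p = {ξ | ξ ∈ Set.Icc xL xU ∧ fcv ξ p ≤ 0 ∧ 0 ≤ fcc ξ p})
    (xcc : Fin nx → (Fin np → ℝ) → ℝ)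
    (hxcc : ∀ i p, xcc i p = sSup ((fun ξ => ξ i) '' F p))
    (p₁ p₂ : Fin np → ℝ) (hp₁ : p₁ ∈ P) (hp₂ : p₂ ∈ P)
    (h₁ : (F p₁).Nonempty) (h₂ : (F p₂).Nonempty)
    (t : ℝ) (ht : t ∈ Set.Icc (0 : ℝ) 1) :
    (F (t • p₁ + (1 - t) • p₂)).Nonempty ∧
      ∀ i : Fin nx,
        xcc i (t • p₁ + (1 - t) • p₂) ≥ t * xcc i p₁ + (1 - t) * xcc i p₂ := by
  obtain ⟨ht0, ht1⟩ := ht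
  have h1t0 : 0 ≤ 1 - t := by linarith
  set p := t • p₁ + (1 - t) • p₂ with hp
  -- key combination lemma
  have comb : ∀ ξ₁ ∈ F p₁, ∀ ξ₂ ∈ F p₂, t • ξ₁ + (1 - t) • ξ₂ ∈ F p := by
    intro ξ₁ hξ₁ ξ₂ hξ₂
    rw [hF] at hξ₁ hξ₂ ⊢
    obtain ⟨hX1, hcv1, hcc1⟩ := hξ₁
    obtain ⟨hX2, hcv2, hcc2⟩ := hξ₂
    have hmem1 : ((ξ₁, p₁) : (Fin nx → ℝ) × (Fin np → ℝ)) ∈ (Set.Icc xL xU) ×ˢ P :=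
      ⟨hX1, hp₁⟩
    have hmem2 : ((ξ₂, p₂) : (Fin nx → ℝ) × (Fin np → ℝ)) ∈ (Set.Icc xL xU) ×ˢ P :=
      ⟨hX2, hp₂⟩
    have hprod : t • ((ξ₁, p₁) : (Fin nx → ℝ) × (Fin np → ℝ)) + (1 - t) • (ξ₂, p₂)
        = (t • ξ₁ + (1 - t) • ξ₂, p) := rfl
    refine ⟨⟨fun i => ?_, fun i => ?_⟩, fun i => ?_, fun i => ?_⟩
    · have l1 := hX1.1 i
      have l2 := hX2.1 i
      simp only [Pi.add_apply, Pi.smul_apply, smul_eq_mul]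
      nlinarith
    · have l1 := hX1.2 i
      have l2 := hX2.2 i
      simp only [Pi.add_apply, Pi.smul_apply, smul_eq_mul]
      nlinarith
    · have := (hcv i).2 hmem1 hmem2 ht0 h1t0 (by ring)
      rw [hprod] at this
      simp only [smul_eq_mul] at this
      have c1 := hcv1 i
      have c2 := hcv2 i
      simp only [Pi.le_def, Pi.zero_apply] at c1 c2 ⊢
      calc fcv (t • ξ₁ + (1 - t) • ξ₂) p i ≤ t * fcv ξ₁ p₁ i + (1 - t) * fcv ξ₂ p₂ i := this
        _ ≤ 0 := by nlinarith [hcv1 i, hcv2 i]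
    · have := (hcc i).2 hmem1 hmem2 ht0 h1t0 (by ring)
      rw [hprod] at this
      simp only [smul_eq_mul] at this
      have c1 : (0:ℝ) ≤ fcc ξ₁ p₁ i := hcc1 i
      have c2 : (0:ℝ) ≤ fcc ξ₂ p₂ i := hcc2 i
      calc (0:ℝ) ≤ t * fcc ξ₁ p₁ i + (1 - t) * fcc ξ₂ p₂ i := by nlinarith
        _ ≤ fcc (t • ξ₁ + (1 - t) • ξ₂) p i := this
  obtain ⟨ξ₁, hξ₁⟩ := h₁
  obtain ⟨ξ₂, hξ₂⟩ := h₂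
  have hne : (F p).Nonempty := ⟨_, comb ξ₁ hξ₁ ξ₂ hξ₂⟩
  refine ⟨hne, fun i => ?_⟩
  have bdd : ∀ q : Fin np → ℝ, BddAbove ((fun ξ => ξ i) '' F q) := by
    intro q
    refine ⟨xU i, ?_⟩
    rintro y ⟨ξ, hξ, rfl⟩
    rw [hF] at hξ
    exact hξ.1.2 i
  rw [hxcc, hxcc, hxcc, ge_iff_le]
  apply sup_helper _ _ _ ⟨_, Set.mem_image_of_mem _ hξ₁⟩ ⟨_, Set.mem_image_of_mem _ hξ₂⟩
    (bdd p₁) (bdd p₂) (bdd p) t ht0 ht1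
  rintro a ⟨ζ₁, hζ₁, rfl⟩ b ⟨ζ₂, hζ₂, rfl⟩
  exact ⟨t • ζ₁ + (1 - t) • ζ₂, comb ζ₁ hζ₁ ζ₂ hζ₂, rfl⟩
end

section
/- Assume that α^{cv,i} ≠ 0 for every i ∈ {1,…,k} and α^{cc,j} ≠ 0 for every j ∈ {1,…,ℓ}. Then for every p ∈ ℝ^{n_p}, the feasible set {ξ ∈ [x^L, x^U] : f^cv(ξ,p) ≤ 0 ≤ f^cc(ξ,p)} equals {ξ ∈ [x^L, x^U] : h^cv(p) ≤ ξ ≤ h^cc(p)}. -/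
open Matrix Set

/-- with piecewise affine relaxations of the residual function, the
feasible set of the implicit-relaxation optimization problems is exactly the
box `{ξ ∈ [xL, xU] : h^cv(p) ≤ ξ ≤ h^cc(p)}` (with `±∞` conventions in `EReal`). -/
theorem feasible_set_eq_box
    (np k l : ℕ) (hnp : 0 < np) [NeZero k] [NeZero l]
    (xL xU : ℝ) (hx : xL ≤ xU)
    (acv : Fin k → Fin np → ℝ) (αcv bcv : Fin k → ℝ)
    (acc : Fin l → Fin np → ℝ) (αcc bcc : Fin l → ℝ)
    (hαcv : ∀ i, αcv i ≠ 0) (hαcc : ∀ j, αcc j ≠ 0)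
    (fcv fcc : ℝ → (Fin np → ℝ) → ℝ)
    (hfcv : ∀ ξ p, fcv ξ p = ⨆ i : Fin k, (acv i ⬝ᵥ p + αcv i * ξ + bcv i))
    (hfcc : ∀ ξ p, fcc ξ p = ⨅ j : Fin l, (acc j ⬝ᵥ p + αcc j * ξ + bcc j))
    (hcv hcc : (Fin np → ℝ) → EReal)
    (hhcv : ∀ p, hcv p = sSup
      ((fun i => ((-(acv i ⬝ᵥ p + bcv i) / αcv i : ℝ) : EReal)) '' {i | αcv i < 0} ∪
       (fun j => ((-(acc j ⬝ᵥ p + bcc j) / αcc j : ℝ) : EReal)) '' {j | 0 < αcc j}))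
    (hhcc : ∀ p, hcc p = sInf
      ((fun i => ((-(acv i ⬝ᵥ p + bcv i) / αcv i : ℝ) : EReal)) '' {i | 0 < αcv i} ∪
       (fun j => ((-(acc j ⬝ᵥ p + bcc j) / αcc j : ℝ) : EReal)) '' {j | αcc j < 0})) :
    ∀ p : Fin np → ℝ,
      {ξ : ℝ | ξ ∈ Set.Icc xL xU ∧ fcv ξ p ≤ 0 ∧ 0 ≤ fcc ξ p} =
        {ξ : ℝ | ξ ∈ Set.Icc xL xU ∧ hcv p ≤ (ξ : EReal) ∧ (ξ : EReal) ≤ hcc p} := by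
  intro p
  haveI hk : Nonempty (Fin k) := Fin.pos_iff_nonempty.mp (Nat.pos_of_ne_zero (NeZero.ne k))
  haveI hl : Nonempty (Fin l) := Fin.pos_iff_nonempty.mp (Nat.pos_of_ne_zero (NeZero.ne l))
  ext ξ
  simp only [Set.mem_setOf_eq]
  constructor
  · rintro ⟨hmem, h1, h2⟩
    refine ⟨hmem, ?_, ?_⟩
    · rw [hhcv]
      apply sSup_le
      rintro x (⟨i, hi, rfl⟩ | ⟨j, hj, rfl⟩)
      · rw [hfcv] at h1
        have h := le_trans (le_ciSup (Set.Finite.bddAbove (Set.finite_range _)) i) h1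
        rw [EReal.coe_le_coe_iff, div_le_iff_of_neg hi]
        nlinarith
      · rw [hfcc] at h2
        have h := le_trans h2 (ciInf_le (Set.Finite.bddBelow (Set.finite_range _)) j)
        rw [EReal.coe_le_coe_iff, div_le_iff₀ hj]
        nlinarith
    · rw [hhcc]
      apply le_sInf
      rintro x (⟨i, hi, rfl⟩ | ⟨j, hj, rfl⟩)
      · rw [hfcv] at h1
        have h := le_trans (le_ciSup (Set.Finite.bddAbove (Set.finite_range _)) i) h1
        rw [EReal.coe_le_coe_iff, le_div_iff₀ hi]
        nlinarith
      · rw [hfcc] at h2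
        have h := le_trans h2 (ciInf_le (Set.Finite.bddBelow (Set.finite_range _)) j)
        rw [EReal.coe_le_coe_iff, le_div_iff_of_neg hj]
        nlinarith
  · rintro ⟨hmem, h1, h2⟩
    rw [hhcv, sSup_le_iff] at h1
    rw [hhcc, le_sInf_iff] at h2
    refine ⟨hmem, ?_, ?_⟩
    · rw [hfcv]
      apply ciSup_le
      intro i
      rcases lt_or_gt_of_ne (hαcv i) with hi | hi
      · have h := h1 _ (Set.mem_union_left _ (Set.mem_image_of_mem _ hi))
        rw [EReal.coe_le_coe_iff, div_le_iff_of_neg hi] at h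
        nlinarith
      · have h := h2 _ (Set.mem_union_left _ (Set.mem_image_of_mem _ hi))
        rw [EReal.coe_le_coe_iff, le_div_iff₀ hi] at h
        nlinarith
    · rw [hfcc]
      apply le_ciInf
      intro j
      rcases lt_or_gt_of_ne (hαcc j) with hj | hj
      · have h := h2 _ (Set.mem_union_right _ (Set.mem_image_of_mem _ hj))
        rw [EReal.coe_le_coe_iff, le_div_iff_of_neg hj] at h
        nlinarith
      · have h := h1 _ (Set.mem_union_right _ (Set.mem_image_of_mem _ hj))
        rw [EReal.coe_le_coe_iff, div_le_iff₀ hj] at h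
        nlinarith
end

section
/- Assume that α^{cv,i} ≠ 0 for every i ∈ {1,…,k} and α^{cc,j} ≠ 0 for every j ∈ {1,…,ℓ}. Let p ∈ ℝ^{n_p} be such that the feasible set S(p) = {ξ ∈ [x^L, x^U] : f^cv(ξ,p) ≤ 0 ≤ f^cc(ξ,p)} is nonempty. Then inf{ξ : ξ ∈ S(p)} = max{x^L, h^cv(p)} = x^cv(p) and sup{ξ : ξ ∈ S(p)} = min{x^U, h^cc(p)} = x^cc(p). -/
open Matrix Set

/-- closed form of the implicit-function relaxations: if the feasible
set `S(p)` is nonempty, then `inf S(p) = max{xL, h^cv(p)} = x^cv(p)` and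
`sup S(p) = min{xU, h^cc(p)} = x^cc(p)` (in `EReal`, with `±∞` conventions). -/
theorem implicit_relaxation_closed_form
    (np k l : ℕ) (hnp : 0 < np) [NeZero k] [NeZero l]
    (xL xU : ℝ) (hx : xL ≤ xU)
    (acv : Fin k → Fin np → ℝ) (αcv bcv : Fin k → ℝ)
    (acc : Fin l → Fin np → ℝ) (αcc bcc : Fin l → ℝ)
    (hαcv : ∀ i, αcv i ≠ 0) (hαcc : ∀ j, αcc j ≠ 0)
    (fcv fcc : ℝ → (Fin np → ℝ) → ℝ)
    (hfcv : ∀ ξ p, fcv ξ p = ⨆ i : Fin k, (acv i ⬝ᵥ p + αcv i * ξ + bcv i))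
    (hfcc : ∀ ξ p, fcc ξ p = ⨅ j : Fin l, (acc j ⬝ᵥ p + αcc j * ξ + bcc j))
    (hcv hcc : (Fin np → ℝ) → EReal)
    (hhcv : ∀ p, hcv p = sSup
      ((fun i => ((-(acv i ⬝ᵥ p + bcv i) / αcv i : ℝ) : EReal)) '' {i | αcv i < 0} ∪
       (fun j => ((-(acc j ⬝ᵥ p + bcc j) / αcc j : ℝ) : EReal)) '' {j | 0 < αcc j}))
    (hhcc : ∀ p, hcc p = sInf
      ((fun i => ((-(acv i ⬝ᵥ p + bcv i) / αcv i : ℝ) : EReal)) '' {i | 0 < αcv i} ∪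
       (fun j => ((-(acc j ⬝ᵥ p + bcc j) / αcc j : ℝ) : EReal)) '' {j | αcc j < 0}))
    (xcv xcc : (Fin np → ℝ) → EReal)
    (hxcv : ∀ p, xcv p = max (xL : EReal) (hcv p))
    (hxcc : ∀ p, xcc p = min (xU : EReal) (hcc p))
    (S : (Fin np → ℝ) → Set ℝ)
    (hS : ∀ p, S p = {ξ | ξ ∈ Set.Icc xL xU ∧ fcv ξ p ≤ 0 ∧ 0 ≤ fcc ξ p})
    (p : Fin np → ℝ) (hne : (S p).Nonempty) :
    ((sInf (S p) : ℝ) : EReal) = max (xL : EReal) (hcv p) ∧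
      ((sInf (S p) : ℝ) : EReal) = xcv p ∧
      ((sSup (S p) : ℝ) : EReal) = min (xU : EReal) (hcc p) ∧
      ((sSup (S p) : ℝ) : EReal) = xcc p := by

  have key : ∀ ξ : ℝ, ξ ∈ S p ↔
      (max (xL : EReal) (hcv p) ≤ (ξ : EReal) ∧ (ξ : EReal) ≤ min (xU : EReal) (hcc p)) := by
    intro ξ
    rw [hS, hhcv p, hhcc p]
    simp only [Set.mem_setOf_eq, Set.mem_Icc, hfcv, hfcc]
    rw [ciSup_le_iff (Set.Finite.bddAbove (Set.finite_range _)),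
        le_ciInf_iff (Set.Finite.bddBelow (Set.finite_range _))]
    constructor
    · rintro ⟨⟨h1, h2⟩, h3, h4⟩
      refine ⟨max_le (by exact_mod_cast h1) (sSup_le ?_),
        le_min (by exact_mod_cast h2) (le_sInf ?_)⟩
      · rintro x (⟨i, hi, rfl⟩ | ⟨j, hj, rfl⟩)
        · simp only [Set.mem_setOf_eq] at hi
          rw [EReal.coe_le_coe_iff, div_le_iff_of_neg hi]
          nlinarith [h3 i]
        · simp only [Set.mem_setOf_eq] at hj
          rw [EReal.coe_le_coe_iff, div_le_iff₀ hj]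
          nlinarith [h4 j]
      · rintro x (⟨i, hi, rfl⟩ | ⟨j, hj, rfl⟩)
        · simp only [Set.mem_setOf_eq] at hi
          rw [EReal.coe_le_coe_iff, le_div_iff₀ hi]
          nlinarith [h3 i]
        · simp only [Set.mem_setOf_eq] at hj
          rw [EReal.coe_le_coe_iff, le_div_iff_of_neg hj]
          nlinarith [h4 j]
    · rintro ⟨h1, h2⟩
      have hxl : xL ≤ ξ := by
        have := (le_max_left _ _).trans h1
        exact_mod_cast this
      have hxu : ξ ≤ xU := by
        have := h2.trans (min_le_left _ _)
        exact_mod_cast this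
      have hsup := (le_max_right _ _).trans h1
      have hinf := h2.trans (min_le_right _ _)
      refine ⟨⟨hxl, hxu⟩, fun i => ?_, fun j => ?_⟩
      · rcases lt_or_gt_of_ne (hαcv i) with hi | hi
        · have h0 : ((-(acv i ⬝ᵥ p + bcv i) / αcv i : ℝ) : EReal) ∈
              (fun i => ((-(acv i ⬝ᵥ p + bcv i) / αcv i : ℝ) : EReal)) '' {i | αcv i < 0} ∪
              (fun j => ((-(acc j ⬝ᵥ p + bcc j) / αcc j : ℝ) : EReal)) '' {j | 0 < αcc j} :=
            Set.mem_union_left _ ⟨i, hi, rfl⟩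
          have hmem : ((-(acv i ⬝ᵥ p + bcv i) / αcv i : ℝ) : EReal) ≤ (ξ : EReal) :=
            (le_sSup h0).trans hsup
          rw [EReal.coe_le_coe_iff, div_le_iff_of_neg hi] at hmem
          nlinarith
        · have hmem : (ξ : EReal) ≤ ((-(acv i ⬝ᵥ p + bcv i) / αcv i : ℝ) : EReal) :=
            hinf.trans (sInf_le (Set.mem_union_left _ ⟨i, hi, rfl⟩))
          rw [EReal.coe_le_coe_iff, le_div_iff₀ hi] at hmem
          nlinarith
      · rcases lt_or_gt_of_ne (hαcc j) with hj | hj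
        · have hmem : (ξ : EReal) ≤ ((-(acc j ⬝ᵥ p + bcc j) / αcc j : ℝ) : EReal) :=
            hinf.trans (sInf_le (Set.mem_union_right _ ⟨j, hj, rfl⟩))
          rw [EReal.coe_le_coe_iff, le_div_iff_of_neg hj] at hmem
          nlinarith
        · have h0 : ((-(acc j ⬝ᵥ p + bcc j) / αcc j : ℝ) : EReal) ∈
              (fun i => ((-(acv i ⬝ᵥ p + bcv i) / αcv i : ℝ) : EReal)) '' {i | αcv i < 0} ∪
              (fun j => ((-(acc j ⬝ᵥ p + bcc j) / αcc j : ℝ) : EReal)) '' {j | 0 < αcc j} :=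
            Set.mem_union_right _ ⟨j, hj, rfl⟩
          have hmem : ((-(acc j ⬝ᵥ p + bcc j) / αcc j : ℝ) : EReal) ≤ (ξ : EReal) :=
            (le_sSup h0).trans hsup
          rw [EReal.coe_le_coe_iff, div_le_iff₀ hj] at hmem
          nlinarith
  obtain ⟨ξ0, hξ0⟩ := hne
  obtain ⟨hξ0l, hξ0u⟩ := (key ξ0).mp hξ0
  have hmbot : max (xL : EReal) (hcv p) ≠ ⊥ := fun h => by simp [max_eq_bot] at h
  have hmtop : max (xL : EReal) (hcv p) ≠ ⊤ := fun h => by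
    rw [h] at hξ0l; exact (EReal.coe_lt_top ξ0).not_ge hξ0l
  have hMtop : min (xU : EReal) (hcc p) ≠ ⊤ := fun h => by simp [min_eq_top] at h
  have hMbot : min (xU : EReal) (hcc p) ≠ ⊥ := fun h => by
    rw [h] at hξ0u; exact (EReal.bot_lt_coe ξ0).not_ge hξ0u
  obtain ⟨mr, hmr⟩ : ∃ r : ℝ, max (xL : EReal) (hcv p) = (r : EReal) :=
    ⟨_, (EReal.coe_toReal hmtop hmbot).symm⟩
  obtain ⟨Mr, hMr⟩ : ∃ r : ℝ, min (xU : EReal) (hcc p) = (r : EReal) :=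
    ⟨_, (EReal.coe_toReal hMtop hMbot).symm⟩
  have hSeq : S p = Set.Icc mr Mr := by
    ext ξ
    rw [key ξ, hmr, hMr, Set.mem_Icc, EReal.coe_le_coe_iff, EReal.coe_le_coe_iff]
  have hle : mr ≤ Mr := by
    rw [hmr] at hξ0l; rw [hMr] at hξ0u
    exact_mod_cast hξ0l.trans hξ0u
  rw [hSeq, csInf_Icc hle, csSup_Icc hle, hxcv, hxcc]
  exact ⟨hmr.symm, hmr.symm, hMr.symm, hMr.symm⟩
end

section
/- Let f : ℝ² → ℝ be convex and fix p̂ ∈ ℝ². Let e₁ = (1,0) and e₂ = (0,1). Then the vector s ∈ ℝ² with components s₁ = ½·(f'(p̂; e₁) − f'(p̂; −e₁)) and s₂ = ½·(f'(p̂; e₂) − f'(p̂; −e₂)) is a subgradient of f at p̂; that is, f(q) ≥ f(p̂) + ⟨s, q − p̂⟩ for all q ∈ ℝ². -/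
/-!
The one-sided directional derivative `D = f'(p; ·)` of a convex function is positively
homogeneous and subadditive, and `D (q - p) ≤ f q - f p`. Its odd part
`σ d = (D d - D (-d)) / 2` is therefore homogeneous of degree one under all real scalars, and
subadditivity gives `D u ≤ D (u + v) + D (-v)` and `D v ≤ D (u + v) + D (-u)`, whose sum is
`σ u + σ v ≤ D (u + v)`. In the plane, `⟨s, q - p⟩ = σ (a • e₁) + σ (b • e₂)` for
`q - p = a • e₁ + b • e₂`, which is thus at most `D (q - p) ≤ f q - f p`.
-/

open Filter Topology Matrix Set

section DirectionalDerivative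

variable {E : Type*} [AddCommGroup E] [Module ℝ E] {f : E → ℝ}

noncomputable def rightDirDeriv (f : E → ℝ) (p d : E) : ℝ :=
  derivWithin (fun t : ℝ => f (p + t • d)) (Ioi 0) 0

lemma ConvexOn.comp_line (hf : ConvexOn ℝ univ f) (p d : E) :
    ConvexOn ℝ univ (fun t : ℝ => f (p + t • d)) := by
  refine (hf.comp_affineMap (AffineMap.lineMap p (p + d))).congr fun t _ => ?_
  simp [AffineMap.lineMap_apply_module', add_comm]

lemma ConvexOn.hasDerivWithinAt_rightDirDeriv (hf : ConvexOn ℝ univ f) (p d : E) :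
    HasDerivWithinAt (fun t : ℝ => f (p + t • d)) (rightDirDeriv f p d) (Ioi 0) 0 :=
  (hf.comp_line p d).hasDerivWithinAt_rightDeriv_of_mem_interior (by simp)

lemma ConvexOn.tendsto_rightDirDeriv (hf : ConvexOn ℝ univ f) (p d : E) :
    Tendsto (fun t : ℝ => (f (p + t • d) - f p) / t) (𝓝[>] 0) (𝓝 (rightDirDeriv f p d)) := by
  simpa [slope_fun_def_field] using (hasDerivWithinAt_iff_tendsto_slope' self_notMem_Ioi).mp
    (hf.hasDerivWithinAt_rightDirDeriv p d)

lemma ConvexOn.rightDirDeriv_le_sub (hf : ConvexOn ℝ univ f) (p d : E) :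
    rightDirDeriv f p d ≤ f (p + d) - f p := by
  simpa [rightDirDeriv, slope_def_field] using
    (hf.comp_line p d).rightDeriv_le_slope_of_mem_interior (x := 0) (by simp) (mem_univ 1) one_pos

lemma rightDirDeriv_zero (f : E → ℝ) (p : E) : rightDirDeriv f p 0 = 0 := by
  simp [rightDirDeriv]

lemma ConvexOn.rightDirDeriv_smul (hf : ConvexOn ℝ univ f) (p d : E) {c : ℝ} (hc : 0 < c) :
    rightDirDeriv f p (c • d) = c * rightDirDeriv f p d := by
  have hscale : HasDerivWithinAt (fun t : ℝ => c * t) c (Ioi 0) 0 := by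
    simpa using ((hasDerivAt_id (0 : ℝ)).const_mul c).hasDerivWithinAt
  have := (hf.hasDerivWithinAt_rightDirDeriv p d).comp_of_eq 0 hscale
    (fun t ht => mul_pos hc ht) (mul_zero c).symm
  have hfun : (fun t : ℝ => f (p + t • (c • d))) = (fun t => f (p + t • d)) ∘ (c * ·) := by
    ext t
    simp [smul_smul, mul_comm]
  rw [rightDirDeriv, hfun, this.derivWithin (uniqueDiffWithinAt_Ioi 0), mul_comm]

lemma ConvexOn.rightDirDeriv_add_le (hf : ConvexOn ℝ univ f) (p u v : E) :
    rightDirDeriv f p (u + v) ≤ rightDirDeriv f p u + rightDirDeriv f p v := by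
  have hdouble : Tendsto (fun t : ℝ => 2 * t) (𝓝[>] 0) (𝓝[>] 0) :=
    tendsto_nhdsWithin_of_tendsto_nhds_of_eventually_within _
      (((continuous_const_mul 2).tendsto' 0 0 (mul_zero 2)).mono_left nhdsWithin_le_nhds)
      (eventually_nhdsWithin_of_forall fun t (ht : 0 < t) => show 0 < 2 * t by positivity)
  refine le_of_tendsto_of_tendsto (hf.tendsto_rightDirDeriv p (u + v))
    (((hf.tendsto_rightDirDeriv p u).comp hdouble).add
      ((hf.tendsto_rightDirDeriv p v).comp hdouble))
    (eventually_nhdsWithin_of_forall fun t (ht : 0 < t) => ?_)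
  have hmid : (1 / 2 : ℝ) • (p + (2 * t) • u) + (1 / 2 : ℝ) • (p + (2 * t) • v) =
      p + t • (u + v) := by
    module
  have hconv := hf.2 (mem_univ (p + (2 * t) • u)) (mem_univ (p + (2 * t) • v))
    (by norm_num : (0 : ℝ) ≤ 1 / 2) (by norm_num : (0 : ℝ) ≤ 1 / 2) (by norm_num)
  rw [hmid, smul_eq_mul, smul_eq_mul] at hconv
  simp only [Function.comp_apply]
  rw [← add_div, div_le_div_iff₀ ht (by positivity)]
  nlinarith

noncomputable def symmDirDeriv (f : E → ℝ) (p d : E) : ℝ :=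
  (rightDirDeriv f p d - rightDirDeriv f p (-d)) / 2

lemma ConvexOn.symmDirDeriv_smul (hf : ConvexOn ℝ univ f) (p d : E) (c : ℝ) :
    symmDirDeriv f p (c • d) = c * symmDirDeriv f p d := by
  unfold symmDirDeriv
  rcases lt_trichotomy c 0 with hc | rfl | hc
  · rw [← neg_smul, show c • d = (-c) • -d by module,
      hf.rightDirDeriv_smul p d (neg_pos.mpr hc), hf.rightDirDeriv_smul p (-d) (neg_pos.mpr hc)]
    ring
  · simp [rightDirDeriv_zero]
  · rw [← smul_neg, hf.rightDirDeriv_smul p d hc, hf.rightDirDeriv_smul p (-d) hc]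
    ring

lemma ConvexOn.symmDirDeriv_add_le (hf : ConvexOn ℝ univ f) (p u v : E) :
    symmDirDeriv f p u + symmDirDeriv f p v ≤ rightDirDeriv f p (u + v) := by
  have hu : rightDirDeriv f p u ≤ rightDirDeriv f p (u + v) + rightDirDeriv f p (-v) := by
    simpa using hf.rightDirDeriv_add_le p (u + v) (-v)
  have hv : rightDirDeriv f p v ≤ rightDirDeriv f p (u + v) + rightDirDeriv f p (-u) := by
    simpa [add_comm u v] using hf.rightDirDeriv_add_le p (u + v) (-u)
  unfold symmDirDeriv
  linarith

end DirectionalDerivative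

/-- for a convex function on ℝ², the vector whose components are
halved differences of directional derivatives along the cardinal directions is a
subgradient. -/
theorem cardinal_directional_derivatives_give_subgradient
    (f : (Fin 2 → ℝ) → ℝ) (hf : ConvexOn ℝ Set.univ f) (phat : Fin 2 → ℝ) :
    ∃ Dpos Dneg : Fin 2 → ℝ,
      (∀ i : Fin 2,
        Tendsto (fun t : ℝ => (f (phat + t • (Pi.single i 1 : Fin 2 → ℝ)) - f phat) / t)
          (𝓝[>] 0) (𝓝 (Dpos i))) ∧
      (∀ i : Fin 2,
        Tendsto (fun t : ℝ => (f (phat + t • (-(Pi.single i 1 : Fin 2 → ℝ))) - f phat) / t)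
          (𝓝[>] 0) (𝓝 (Dneg i))) ∧
      (∀ q : Fin 2 → ℝ,
        f q ≥ f phat + (fun i => (Dpos i - Dneg i) / 2) ⬝ᵥ (q - phat)) := by
  set e : Fin 2 → Fin 2 → ℝ := fun i => Pi.single i 1
  refine ⟨fun i => rightDirDeriv f phat (e i), fun i => rightDirDeriv f phat (-e i),
    fun i => hf.tendsto_rightDirDeriv phat _, fun i => hf.tendsto_rightDirDeriv phat _,
    fun q => ?_⟩
  obtain ⟨d, rfl⟩ : ∃ d, q = phat + d := ⟨q - phat, by abel⟩
  have hsplit : d 0 • e 0 + d 1 • e 1 = d := by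
    ext i
    fin_cases i <;> simp [e]
  rw [add_sub_cancel_left]
  calc f phat + (fun i => (rightDirDeriv f phat (e i) - rightDirDeriv f phat (-e i)) / 2) ⬝ᵥ d
      = f phat + (symmDirDeriv f phat (d 0 • e 0) + symmDirDeriv f phat (d 1 • e 1)) := by
        rw [hf.symmDirDeriv_smul, hf.symmDirDeriv_smul]
        simp only [symmDirDeriv, dotProduct, Fin.sum_univ_two]
        ring
    _ ≤ f phat + rightDirDeriv f phat d := by
        simpa [hsplit] using hf.symmDirDeriv_add_le phat (d 0 • e 0) (d 1 • e 1)
    _ ≤ f (phat + d) := by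
        linarith [hf.rightDirDeriv_le_sub phat d]
end

section
/- Under the stated boundedness and strong Slater assumptions, the optimal-value function v is finite on the neighborhood N of p̂ and is Lipschitz continuous on some neighborhood of p̂; that is, there exist L ≥ 0 and δ > 0 such that |v(p) − v(q)| ≤ L·‖p − q‖ whenever ‖p − p̂‖ < δ and ‖q − p̂‖ < δ. -/
/-!
Independent rows make `A` surjective, so there is a linear `T` with `A ∘ T = C`, and
`ξ ↦ ξ + T (p - q)` carries points satisfying the equality constraint at `p` to points satisfying
it at `q`, moving them by `O(‖p - q‖)`. Convex functions on a finite-dimensional space are locally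
Lipschitz, so the shifted point violates each inequality constraint by at most `a = O(‖p - q‖)`.
The Slater point, shifted the same way, stays strictly feasible with a uniform margin `ε` near
`p̂`, and moving the shifted point towards it by the fraction `a / (a + ε)` restores feasibility.
So every point of `Ω p` lies within `L ‖p - q‖` of `Ω q`, and since the objective `ξ ↦ ξ i` is
`1`-Lipschitz and bounded below on `Ω`, its infimum moves by at most `L ‖p - q‖`.
-/

open Matrix Set Filter Topology Metric

theorem Matrix.mulVecLin_surjective_of_linearIndependent_row {K m n : Type*} [Field K] [Fintype m]
    [Fintype n] {A : Matrix m n K} (hA : LinearIndependent K A.row) :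
    Function.Surjective A.mulVecLin := by
  have hrange : LinearMap.range A.mulVecLin = ⊤ :=
    Submodule.eq_top_of_finrank_eq <| by
      rw [← Matrix.rank, hA.rank_matrix, Module.finrank_fintype_fun_eq_card]
  exact LinearMap.range_eq_top.1 hrange

theorem LinearMap.exists_continuousLinearMap_apply_eq {𝕜 X P Y : Type*}
    [NontriviallyNormedField 𝕜] [CompleteSpace 𝕜] [NormedAddCommGroup X] [NormedSpace 𝕜 X]
    [NormedAddCommGroup P] [NormedSpace 𝕜 P] [FiniteDimensional 𝕜 P] [AddCommGroup Y] [Module 𝕜 Y]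
    {A : X →ₗ[𝕜] Y}
    (hA : Function.Surjective A) (C : P →ₗ[𝕜] Y) : ∃ T : P →L[𝕜] X, ∀ y, A (T y) = C y := by
  obtain ⟨T, hT⟩ := hA.surjective_linearMapComp_left C
  exact ⟨LinearMap.toContinuousLinearMap T, fun y => by simp [← hT]⟩

theorem exists_pos_eventually_forall_lt_neg {P ι : Type*} [TopologicalSpace P] [Finite ι]
    {φ : ι → P → ℝ} {p₀ : P} (hφ : ∀ k, ContinuousAt (φ k) p₀) (h : ∀ k, φ k p₀ < 0) :
    ∃ ε > 0, ∀ᶠ q in 𝓝 p₀, ∀ k, φ k q < -ε := by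
  have hε : ∀ᶠ ε in 𝓝[>] (0 : ℝ), ∀ k, φ k p₀ < -ε := eventually_all.2 fun k =>
    nhdsWithin_le_nhds <| (eventually_lt_nhds (neg_pos.2 (h k))).mono fun _ hε => by linarith
  obtain ⟨ε, hεk, hε0⟩ := (hε.and self_mem_nhdsWithin).exists
  exact ⟨ε, hε0, eventually_all.2 fun k => (hφ k).eventually_lt continuousAt_const (hεk k)⟩

theorem IsCompact.exists_lipschitzOnWith_forall {α β ι : Type*} [PseudoMetricSpace α]
    [PseudoMetricSpace β] [Finite ι] {s : Set α} (hs : IsCompact s) {f : ι → α → β}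
    (hf : ∀ k, LocallyLipschitzOn s (f k)) :
    ∃ K, ∀ k, LipschitzOnWith K (f k) s := by
  have := Fintype.ofFinite ι
  choose K hK using fun k => (hf k).exists_lipschitzOnWith_of_compact hs
  exact ⟨∑ k, K k, fun k => (hK k).weaken (Finset.single_le_sum (by simp) (Finset.mem_univ k))⟩

theorem ConvexOn.map_combo_nonpos {E : Type*} [AddCommGroup E] [Module ℝ E] {s : Set E}
    {f : E → ℝ} (hf : ConvexOn ℝ s f) {x y : E} (hx : x ∈ s) (hy : y ∈ s) {a e : ℝ} (ha : 0 ≤ a)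
    (he : 0 < e) (hfx : f x ≤ a) (hfy : f y ≤ -e) :
    f ((1 - a / (a + e)) • x + (a / (a + e)) • y) ≤ 0 := by
  have hae : 0 < a + e := by positivity
  have ht0 : 0 ≤ a / (a + e) := by positivity
  have ht1 : a / (a + e) ≤ 1 := (div_le_one hae).2 (by linarith)
  calc f ((1 - a / (a + e)) • x + (a / (a + e)) • y)
      ≤ (1 - a / (a + e)) * f x + a / (a + e) * f y :=
        hf.2 hx hy (by linarith) ht0 (by ring)
    _ ≤ (1 - a / (a + e)) * a + a / (a + e) * -e := by gcongr
    _ = 0 := by field_simp; ring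

theorem csInf_image_le_csInf_image_add {X : Type*} [PseudoMetricSpace X] {f : X → ℝ} {K : NNReal}
    (hf : LipschitzWith K f) {S T : Set X} {d : ℝ} (hS : S.Nonempty) (hT : BddBelow (f '' T))
    (h : ∀ x ∈ S, ∃ y ∈ T, dist y x ≤ d) : sInf (f '' T) ≤ sInf (f '' S) + K * d := by
  rw [← sub_le_iff_le_add]
  refine le_csInf (hS.image f) ?_
  rintro _ ⟨x, hx, rfl⟩
  obtain ⟨y, hy, hyx⟩ := h x hx
  have hfy : f y ≤ f x + K * d := calc
    f y ≤ f x + K * dist y x := by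
      linarith [(abs_le.1 (hf.dist_le_mul y x)).2, Real.dist_eq (f y) (f x)]
    _ ≤ f x + K * d := by gcongr
  linarith [csInf_le hT (mem_image_of_mem f hy)]

section ConvexProgram

variable {X P Y ι : Type*} [NormedAddCommGroup X] [NormedSpace ℝ X] [NormedAddCommGroup P]
  [NormedSpace ℝ P] [AddCommGroup Y] [Module ℝ Y]

def feasibleSet (A : X →ₗ[ℝ] Y) (C : P →ₗ[ℝ] Y) (b : Y) (g : ι → X → P → ℝ) (p : P) : Set X :=
  {ξ | A ξ + C p + b = 0 ∧ ∀ k, g k ξ p ≤ 0}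

variable {A : X →ₗ[ℝ] Y} {C : P →ₗ[ℝ] Y} {b : Y} {g : ι → X → P → ℝ}

theorem exists_mem_feasibleSet_norm_sub_le
    (hg : ∀ k, ConvexOn ℝ univ (fun z : X × P => g k z.1 z.2)) {q : P} {η σ : X} {a e : ℝ}
    (ha : 0 ≤ a) (he : 0 < e) (hη : A η + C q + b = 0) (hηg : ∀ k, g k η q ≤ a)
    (hσ : A σ + C q + b = 0) (hσg : ∀ k, g k σ q ≤ -e) :
    ∃ ζ ∈ feasibleSet A C b g q, ‖ζ - η‖ ≤ a / e * ‖σ - η‖ := by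
  set t := a / (a + e) with ht
  have ht0 : 0 ≤ t := by positivity
  refine ⟨(1 - t) • η + t • σ, ⟨?_, fun k => ?_⟩, ?_⟩
  · calc A ((1 - t) • η + t • σ) + C q + b
          = (1 - t) • (A η + C q + b) + t • (A σ + C q + b) := by
            simp only [map_add, map_smul]; module
      _ = 0 := by rw [hη, hσ]; simp
  · have hcombo : (1 - t) • (η, q) + t • (σ, q) = ((1 - t) • η + t • σ, q) := by
      ext
      · rfl
      · exact Convex.combo_self (by ring) q
    have h := (hg k).map_combo_nonpos (mem_univ (η, q)) (mem_univ (σ, q)) ha he (hηg k) (hσg k)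
    rw [← ht, hcombo] at h
    exact h
  · calc ‖(1 - t) • η + t • σ - η‖ = t * ‖σ - η‖ := by
          rw [show (1 - t) • η + t • σ - η = t • (σ - η) by module, norm_smul,
            Real.norm_of_nonneg ht0]
      _ ≤ a / e * ‖σ - η‖ := by gcongr; exact div_le_div_of_nonneg_left ha he (by linarith)

variable [FiniteDimensional ℝ X] [FiniteDimensional ℝ P] [Finite ι]

theorem exists_uniform_strictly_feasible (hA : Function.Surjective A)
    (hg : ∀ k, ConvexOn ℝ univ (fun z : X × P => g k z.1 z.2)) {p₀ : P} {ξ₀ : X}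
    (hξ₀ : A ξ₀ + C p₀ + b = 0) (hξ₀g : ∀ k, g k ξ₀ p₀ < 0) :
    ∃ ε > 0, ∃ δ > 0, ∀ q, ‖q - p₀‖ < δ → ∃ σ, A σ + C q + b = 0 ∧ ∀ k, g k σ q ≤ -ε := by
  obtain ⟨T, hT⟩ := A.exists_continuousLinearMap_apply_eq hA C
  set s : P → X := fun q => ξ₀ + T (p₀ - q)
  have hs : ∀ q, A (s q) + C q + b = 0 := fun q => by
    simp only [s, map_add, hT, map_sub]
    rw [← hξ₀]
    abel
  have hcont : ∀ k, Continuous fun q => g k (s q) q := fun k =>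
    (continuousOn_univ.1 ((hg k).continuousOn isOpen_univ)).comp
      (by fun_prop : Continuous fun q => (s q, q))
  obtain ⟨ε, hε, hev⟩ := exists_pos_eventually_forall_lt_neg (p₀ := p₀)
    (fun k => (hcont k).continuousAt) (fun k => by simpa [s] using hξ₀g k)
  obtain ⟨δ, hδ, hball⟩ := Metric.eventually_nhds_iff.1 hev
  exact ⟨ε, hε, δ, hδ, fun q hq => ⟨s q, hs q, fun k => (hball (by rwa [dist_eq_norm]) k).le⟩⟩

theorem exists_constraint_shift_le (hg : ∀ k, ConvexOn ℝ univ (fun z : X × P => g k z.1 z.2))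
    (T : P →L[ℝ] X) (R : ℝ) (p₀ : P) :
    ∃ M : ℝ, 0 ≤ M ∧ ∀ p q, ‖p - p₀‖ < 1 → ‖q - p₀‖ < 1 → ∀ ξ, ‖ξ‖ ≤ R → ∀ k,
      g k (ξ + T (p - q)) q ≤ g k ξ p + M * ‖p - q‖ := by
  set K : Set (X × P) := closedBall 0 (R + 2 * ‖T‖) ×ˢ closedBall p₀ 1
  have hK : IsCompact K := (isCompact_closedBall _ _).prod (isCompact_closedBall _ _)
  obtain ⟨M, hM⟩ := hK.exists_lipschitzOnWith_forall fun k =>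
    (hg k).locallyLipschitz.locallyLipschitzOn
  refine ⟨M * (‖T‖ + 1), by positivity, fun p q hp hq ξ hξ k => ?_⟩
  have hpq : ‖p - q‖ ≤ 2 := by
    have := norm_sub_le_norm_sub_add_norm_sub p p₀ q
    rw [norm_sub_rev p₀ q] at this
    linarith
  have hTpq : ‖T (p - q)‖ ≤ ‖T‖ * ‖p - q‖ := T.le_opNorm _
  have hξK : (ξ, p) ∈ K := by
    simp only [K, mem_prod, mem_closedBall, dist_eq_norm, sub_zero]
    constructor <;> linarith [norm_nonneg T]
  have hηK : (ξ + T (p - q), q) ∈ K := by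
    simp only [K, mem_prod, mem_closedBall, dist_eq_norm, sub_zero]
    constructor
    · nlinarith [norm_add_le ξ (T (p - q)), norm_nonneg T]
    · linarith
  have hdist : dist (ξ + T (p - q), q) (ξ, p) ≤ (‖T‖ + 1) * ‖p - q‖ := by
    rw [Prod.dist_eq, dist_eq_norm, dist_eq_norm, add_sub_cancel_left, norm_sub_rev q p]
    exact max_le (by nlinarith [norm_nonneg (p - q)])
      (by nlinarith [norm_nonneg T, norm_nonneg (p - q)])
  have := (hM k).dist_le_mul _ hηK _ hξK
  rw [Real.dist_eq] at this
  nlinarith [le_abs_self (g k (ξ + T (p - q)) q - g k ξ p), NNReal.coe_nonneg M]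

theorem exists_lipschitz_feasibleSet (hA : Function.Surjective A)
    (hg : ∀ k, ConvexOn ℝ univ (fun z : X × P => g k z.1 z.2)) {R : ℝ}
    (hR : ∀ p, ∀ ξ ∈ feasibleSet A C b g p, ‖ξ‖ ≤ R) {p₀ : P} {ξ₀ : X}
    (hξ₀ : A ξ₀ + C p₀ + b = 0) (hξ₀g : ∀ k, g k ξ₀ p₀ < 0) :
    ∃ L, 0 ≤ L ∧ ∃ δ > 0, ∀ p q, ‖p - p₀‖ < δ → ‖q - p₀‖ < δ →
      ∀ ξ ∈ feasibleSet A C b g p, ∃ ζ ∈ feasibleSet A C b g q, ‖ζ - ξ‖ ≤ L * ‖p - q‖ := by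
  obtain ⟨T, hT⟩ := A.exists_continuousLinearMap_apply_eq hA C
  obtain ⟨ε, hε, δ, hδ, hstrict⟩ := exists_uniform_strictly_feasible hA hg hξ₀ hξ₀g
  obtain ⟨M, hM0, hM⟩ := exists_constraint_shift_le hg T R p₀
  have hR0 : 0 ≤ R := (norm_nonneg ξ₀).trans (hR p₀ ξ₀ ⟨hξ₀, fun k => (hξ₀g k).le⟩)
  refine ⟨‖T‖ + M / ε * (2 * R + 2 * ‖T‖), by positivity, min δ 1, by positivity,
    fun p q hp hq ξ hξ => ?_⟩
  have hp1 : ‖p - p₀‖ < 1 := hp.trans_le (min_le_right _ _)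
  have hq1 : ‖q - p₀‖ < 1 := hq.trans_le (min_le_right _ _)
  have hpq : ‖p - q‖ ≤ 2 := by
    have := norm_sub_le_norm_sub_add_norm_sub p p₀ q
    rw [norm_sub_rev p₀ q] at this
    linarith
  have hTpq : ‖T (p - q)‖ ≤ ‖T‖ * ‖p - q‖ := T.le_opNorm _
  set η := ξ + T (p - q)
  have hη : A η + C q + b = 0 := by
    simp only [η, map_add, hT, map_sub]
    rw [← hξ.1]
    abel
  have hηg : ∀ k, g k η q ≤ M * ‖p - q‖ := fun k => by
    linarith [hM p q hp1 hq1 ξ (hR p ξ hξ) k, hξ.2 k]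
  obtain ⟨σ, hσ, hσg⟩ := hstrict q (hq.trans_le (min_le_left _ _))
  obtain ⟨ζ, hζ, hζη⟩ := exists_mem_feasibleSet_norm_sub_le hg (by positivity) hε hη hηg hσ hσg
  have hση : ‖σ - η‖ ≤ 2 * R + 2 * ‖T‖ := by
    have := hR q σ ⟨hσ, fun k => (hσg k).trans (by linarith)⟩
    nlinarith [norm_sub_le σ η, norm_add_le ξ (T (p - q)), hR p ξ hξ, norm_nonneg T]
  refine ⟨ζ, hζ, ?_⟩
  calc ‖ζ - ξ‖ ≤ ‖ζ - η‖ + ‖η - ξ‖ := norm_sub_le_norm_sub_add_norm_sub ζ η ξ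
    _ ≤ M * ‖p - q‖ / ε * (2 * R + 2 * ‖T‖) + ‖T‖ * ‖p - q‖ := by
        gcongr
        · exact hζη.trans (by gcongr)
        · simpa [η] using hTpq
    _ = (‖T‖ + M / ε * (2 * R + 2 * ‖T‖)) * ‖p - q‖ := by ring

end ConvexProgram

theorem optimal_value_function_lipschitz_general
    (nx np ng nh : ℕ)
    (g : Fin ng → (Fin nx → ℝ) → (Fin np → ℝ) → ℝ)
    (hg_convex : ∀ k : Fin ng,
      ConvexOn ℝ Set.univ (fun q : (Fin nx → ℝ) × (Fin np → ℝ) => g k q.1 q.2))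
    (A : Matrix (Fin nh) (Fin nx) ℝ) (C : Matrix (Fin nh) (Fin np) ℝ)
    (b : Fin nh → ℝ)
    (hA : LinearIndependent ℝ (fun j : Fin nh => A j))
    (Ω : (Fin np → ℝ) → Set (Fin nx → ℝ))
    (hΩ : ∀ p, Ω p =
      {ξ | A.mulVec ξ + C.mulVec p + b = 0 ∧ ∀ k : Fin ng, g k ξ p ≤ 0})
    (i : Fin nx)
    (v : (Fin np → ℝ) → ℝ)
    (hv : ∀ p, v p = sInf ((fun ξ => ξ i) '' Ω p))
    (phat : Fin np → ℝ)
    (hbdd : ∃ R : ℝ, 0 < R ∧ ∀ p : Fin np → ℝ, ∀ ξ ∈ Ω p, ‖ξ‖ ≤ R)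
    (N : Set (Fin np → ℝ)) (hpN : phat ∈ N)
    (hslater : ∀ p ∈ N, ∃ ξ : Fin nx → ℝ,
      A.mulVec ξ + C.mulVec p + b = 0 ∧ ∀ k : Fin ng, g k ξ p < 0) :
    (∀ p ∈ N, (Ω p).Nonempty) ∧
      ∃ L : ℝ, 0 ≤ L ∧ ∃ δ : ℝ, 0 < δ ∧
        ∀ p q : Fin np → ℝ, ‖p - phat‖ < δ → ‖q - phat‖ < δ →
          |v p - v q| ≤ L * ‖p - q‖ := by
  obtain ⟨R, -, hR⟩ := hbdd
  obtain rfl : Ω = feasibleSet A.mulVecLin C.mulVecLin b g := funext hΩ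
  obtain ⟨ξ₀, hξ₀, hξ₀g⟩ := hslater phat hpN
  obtain ⟨L, hL, δ, hδ, hnear⟩ := exists_lipschitz_feasibleSet
    (Matrix.mulVecLin_surjective_of_linearIndependent_row hA) hg_convex hR hξ₀ hξ₀g
  have hne : ∀ p, ‖p - phat‖ < δ → (feasibleSet A.mulVecLin C.mulVecLin b g p).Nonempty :=
    fun p hp => (hnear phat p (by simpa using hδ) hp ξ₀ ⟨hξ₀, fun k => (hξ₀g k).le⟩).imp
      fun _ h => h.1
  have hbddBelow : ∀ p, BddBelow ((fun ξ => ξ i) '' feasibleSet A.mulVecLin C.mulVecLin b g p) := by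
    refine fun p => ⟨-R, ?_⟩
    rintro _ ⟨ξ, hξ, rfl⟩
    exact neg_le_of_abs_le ((norm_le_pi_norm ξ i).trans (hR p ξ hξ))
  have hinf : ∀ p q, ‖p - phat‖ < δ → ‖q - phat‖ < δ → v q ≤ v p + L * ‖p - q‖ :=
    fun p q hp hq => by
      simpa [hv, dist_eq_norm] using csInf_image_le_csInf_image_add (LipschitzWith.eval i)
        (hne p hp) (hbddBelow q) (hnear p q hp hq)
  refine ⟨fun p hp => ?_, L, hL, δ, hδ, fun p q hp hq => abs_sub_le_iff.2 ⟨?_, ?_⟩⟩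
  · obtain ⟨ξ, hξ, hξg⟩ := hslater p hp
    exact ⟨ξ, hξ, fun k => (hξg k).le⟩
  · linarith [norm_sub_rev q p ▸ hinf q p hq hp]
  · linarith [hinf p q hp hq]

/-- under boundedness and the strong Slater condition, the
optimal-value function `v` is finite on `N` and Lipschitz continuous near `p̂`. -/
theorem optimal_value_function_lipschitz
    (nx np ng nh : ℕ) (hnx : 0 < nx) (hnp : 0 < np) (hng : 0 < ng) (hnh : 0 < nh)
    (g : Fin ng → (Fin nx → ℝ) → (Fin np → ℝ) → ℝ)
    (hg_smooth : ∀ k : Fin ng,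
      ContDiff ℝ 1 (fun q : (Fin nx → ℝ) × (Fin np → ℝ) => g k q.1 q.2))
    (hg_convex : ∀ k : Fin ng,
      ConvexOn ℝ Set.univ (fun q : (Fin nx → ℝ) × (Fin np → ℝ) => g k q.1 q.2))
    (A : Matrix (Fin nh) (Fin nx) ℝ) (C : Matrix (Fin nh) (Fin np) ℝ)
    (b : Fin nh → ℝ)
    (hA : LinearIndependent ℝ (fun j : Fin nh => A j))
    (Ω : (Fin np → ℝ) → Set (Fin nx → ℝ))
    (hΩ : ∀ p, Ω p =
      {ξ | A.mulVec ξ + C.mulVec p + b = 0 ∧ ∀ k : Fin ng, g k ξ p ≤ 0})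
    (i : Fin nx)
    (v : (Fin np → ℝ) → ℝ)
    (hv : ∀ p, v p = sInf ((fun ξ => ξ i) '' Ω p))
    (phat : Fin np → ℝ)
    (hbdd : ∃ R : ℝ, 0 < R ∧ ∀ p : Fin np → ℝ, ∀ ξ ∈ Ω p, ‖ξ‖ ≤ R)
    (N : Set (Fin np → ℝ)) (hNopen : IsOpen N) (hpN : phat ∈ N)
    (hslater : ∀ p ∈ N, ∃ ξ : Fin nx → ℝ,
      A.mulVec ξ + C.mulVec p + b = 0 ∧ ∀ k : Fin ng, g k ξ p < 0) :
    (∀ p ∈ N, (Ω p).Nonempty) ∧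
      ∃ L : ℝ, 0 ≤ L ∧ ∃ δ : ℝ, 0 < δ ∧
        ∀ p q : Fin np → ℝ, ‖p - phat‖ < δ → ‖q - phat‖ < δ →
          |v p - v q| ≤ L * ‖p - q‖ :=
  optimal_value_function_lipschitz_general nx np ng nh g hg_convex A C b hA Ω hΩ i v hv phat hbdd N
    hpN hslater
end
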